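/- Let X be a nonempty compact Hausdorff topological space and h : [0,1] × X → ℝ continuous. Then the following are equivalent: (a) there exist points x₊, x₋ ∈ X such that h(t,x₊) = max_{x∈X} h(t,x) and h(t,x₋) = min_{x∈X} h(t,x) for every t ∈ [0,1]; (b) for every continuous G : [0,1] × X → ℝ satisfying ∫₀¹ G(t,x) dt = 0 for all x ∈ X, and for every s ∈ ℝ, one has ‖h − s·G‖ ≥ ‖h‖. -/

import Mathlib

open Set

/-- The Hofer (oscillation) norm of a function `u : [0,1] × X → ℝ`:
`‖u‖ = ∫₀¹ (max_{x∈X} u(t,x) − min_{x∈X} u(t,x)) dt`. -/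
noncomputable def hoferNorm {X : Type*} [TopologicalSpace X] (u : ℝ → X → ℝ) : ℝ :=
  ∫ t in (0:ℝ)..1, ((⨆ x, u t x) - (⨅ x, u t x))


open Filter Topology MeasureTheory
set_option linter.unusedSectionVars false
set_option linter.unusedVariables false

section
variable {X : Type*} [TopologicalSpace X] [CompactSpace X] [Nonempty X]

lemma ciSup_le_ciSup_add_dist (f g : C(X, ℝ)) : (⨆ x, f x) ≤ (⨆ x, g x) + dist f g := by
  refine ciSup_le fun x => ?_
  have h1 : f x ≤ g x + dist f g := by
    have := ContinuousMap.dist_apply_le_dist (f := f) (g := g) x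
    have := abs_sub_le_iff.mp (by simpa [Real.dist_eq] using this)
    linarith [this.1]
  exact h1.trans (by gcongr; exact le_ciSup (isCompact_range g.continuous).bddAbove x)

lemma lipschitz_iSup : LipschitzWith 1 (fun f : C(X,ℝ) => ⨆ x, f x) := by
  refine LipschitzWith.of_dist_le_mul fun f g => ?_
  rw [Real.dist_eq]
  push_cast
  rw [one_mul, abs_sub_le_iff]
  constructor
  · linarith [ciSup_le_ciSup_add_dist f g]
  · linarith [ciSup_le_ciSup_add_dist g f, dist_comm f g]

lemma continuous_iSup_comp {α : Type*} [TopologicalSpace α] (F : C(α × X, ℝ)) :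
    Continuous fun a => ⨆ x, F (a, x) := by
  have : (fun a => ⨆ x, F (a, x)) = (fun f : C(X,ℝ) => ⨆ x, f x) ∘ (F.curry) := by
    ext a; simp [ContinuousMap.curry]; rfl
  rw [this]
  exact lipschitz_iSup.continuous.comp F.curry.continuous
lemma real_iInf_eq_neg_iSup_neg {ι : Sort*} (f : ι → ℝ) : (⨅ x, f x) = -(⨆ x, -f x) := by
  rw [iInf, iSup, Real.sInf_def]
  congr 2
  ext y
  constructor
  · rintro ⟨z, hz⟩; exact ⟨z, by simp only at hz ⊢; linarith⟩
  · rintro ⟨z, hz⟩; exact ⟨z, by simp only at hz ⊢; linarith⟩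

end

section
variable {X : Type*} [TopologicalSpace X] [CompactSpace X] [Nonempty X]
variable {h : ℝ → X → ℝ}

lemma slice_cont (hc : ContinuousOn (fun p : ℝ × X => h p.1 p.2) (Icc 0 1 ×ˢ univ))
    {t : ℝ} (ht : t ∈ Icc (0:ℝ) 1) : Continuous (h t) := by
  have : Continuous fun x : X => (t, x) := Continuous.prodMk continuous_const continuous_id
  exact hc.comp_continuous this (fun x => ⟨ht, mem_univ x⟩)

lemma tslice_cont (hc : ContinuousOn (fun p : ℝ × X => h p.1 p.2) (Icc 0 1 ×ˢ univ))
    (x : X) : ContinuousOn (fun t => h t x) (Icc 0 1) := by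
  have : ContinuousOn (fun t : ℝ => ((t, x) : ℝ × X)) (Icc 0 1) :=
    (continuous_id.prodMk continuous_const).continuousOn
  exact hc.comp this (fun t ht => ⟨ht, mem_univ x⟩)

/-- the restricted continuous map on `Icc 0 1 × X`. -/
noncomputable def resCM (hc : ContinuousOn (fun p : ℝ × X => h p.1 p.2) (Icc 0 1 ×ˢ univ)) :
    C((Icc (0:ℝ) 1) × X, ℝ) :=
  ⟨fun p => h p.1 p.2, by
    have hmap : ∀ p : (Icc (0:ℝ) 1) × X, ((p.1 : ℝ), p.2) ∈ Icc (0:ℝ) 1 ×ˢ (univ : Set X) :=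
      fun p => ⟨p.1.2, mem_univ _⟩
    have : Continuous fun p : (Icc (0:ℝ) 1) × X => ((p.1 : ℝ), p.2) :=
      (continuous_subtype_val.comp continuous_fst).prodMk continuous_snd
    exact hc.comp_continuous this hmap⟩

end

set_option linter.unusedSectionVars false

section
variable {X : Type*} [TopologicalSpace X] [CompactSpace X] [Nonempty X]
variable {h : ℝ → X → ℝ}

lemma bddAbove_slice (hc : ContinuousOn (fun p : ℝ × X => h p.1 p.2) (Icc 0 1 ×ˢ univ))
    {t : ℝ} (ht : t ∈ Icc (0:ℝ) 1) : BddAbove (range (h t)) :=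
  (isCompact_range (slice_cont hc ht)).bddAbove

lemma bddBelow_slice (hc : ContinuousOn (fun p : ℝ × X => h p.1 p.2) (Icc 0 1 ×ˢ univ))
    {t : ℝ} (ht : t ∈ Icc (0:ℝ) 1) : BddBelow (range (h t)) :=
  (isCompact_range (slice_cont hc ht)).bddBelow

lemma le_iSup_slice (hc : ContinuousOn (fun p : ℝ × X => h p.1 p.2) (Icc 0 1 ×ˢ univ))
    {t : ℝ} (ht : t ∈ Icc (0:ℝ) 1) (x : X) : h t x ≤ ⨆ y, h t y :=
  le_ciSup (bddAbove_slice hc ht) x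

lemma iInf_le_slice (hc : ContinuousOn (fun p : ℝ × X => h p.1 p.2) (Icc 0 1 ×ˢ univ))
    {t : ℝ} (ht : t ∈ Icc (0:ℝ) 1) (x : X) : (⨅ y, h t y) ≤ h t x :=
  ciInf_le (bddBelow_slice hc ht) x

lemma exists_max_slice (hc : ContinuousOn (fun p : ℝ × X => h p.1 p.2) (Icc 0 1 ×ˢ univ))
    {t : ℝ} (ht : t ∈ Icc (0:ℝ) 1) : ∃ x, h t x = ⨆ y, h t y := by
  obtain ⟨x, -, hx⟩ := isCompact_univ.exists_isMaxOn univ_nonempty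
    (slice_cont hc ht).continuousOn
  refine ⟨x, le_antisymm (le_iSup_slice hc ht x) (ciSup_le fun y => hx (mem_univ y))⟩

lemma contOn_iSup (hc : ContinuousOn (fun p : ℝ × X => h p.1 p.2) (Icc 0 1 ×ˢ univ)) :
    ContinuousOn (fun t => ⨆ x, h t x) (Icc 0 1) := by
  rw [continuousOn_iff_continuous_restrict]
  have := continuous_iSup_comp (resCM hc)
  exact (by simpa [resCM, Set.restrict] using this : Continuous fun a : Icc (0:ℝ) 1 => ⨆ x, h (↑a) x)

lemma contOn_iInf (hc : ContinuousOn (fun p : ℝ × X => h p.1 p.2) (Icc 0 1 ×ˢ univ)) :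
    ContinuousOn (fun t => ⨅ x, h t x) (Icc 0 1) := by
  have : (fun t => ⨅ x, h t x) = fun t => -(⨆ x, -h t x) := by
    ext t; exact real_iInf_eq_neg_iSup_neg _
  rw [this]
  exact (contOn_iSup (X := X) (h := fun t x => -h t x) (by exact hc.neg)).neg

end

section
variable {X : Type*} [TopologicalSpace X] [CompactSpace X] [Nonempty X]
variable {h : ℝ → X → ℝ}

lemma modulus (hc : ContinuousOn (fun p : ℝ × X => h p.1 p.2) (Icc 0 1 ×ˢ univ))
    {ε : ℝ} (hε : 0 < ε) :
    ∃ δ > 0, ∀ t ∈ Icc (0:ℝ) 1, ∀ t' ∈ Icc (0:ℝ) 1, |t - t'| ≤ δ →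
      ∀ x, |h t x - h t' x| ≤ ε := by
  haveI : CompactSpace (Icc (0:ℝ) 1) := isCompact_iff_compactSpace.mp isCompact_Icc
  have hΦ : UniformContinuous (ContinuousMap.curry (resCM hc)) :=
    CompactSpace.uniformContinuous_of_continuous (ContinuousMap.curry (resCM hc)).continuous
  obtain ⟨δ, hδ, hd⟩ := Metric.uniformContinuous_iff.mp hΦ ε hε
  refine ⟨δ/2, by positivity, fun t ht t' ht' htt x => ?_⟩
  have h1 : dist (⟨t, ht⟩ : Icc (0:ℝ) 1) ⟨t', ht'⟩ < δ := by
    rw [Subtype.dist_eq, Real.dist_eq]; linarith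
  have h2 := hd h1
  have h3 := ContinuousMap.dist_apply_le_dist (f := ContinuousMap.curry (resCM hc) ⟨t, ht⟩)
    (g := ContinuousMap.curry (resCM hc) ⟨t', ht'⟩) x
  have : dist (h t x) (h t' x) < ε := lt_of_le_of_lt (by simpa [resCM] using h3) h2
  rw [Real.dist_eq] at this; linarith

end

section
variable {X : Type*} [TopologicalSpace X] [CompactSpace X] [Nonempty X]
variable {h : ℝ → X → ℝ}

lemma abs_ciSup_sub {f g : X → ℝ} {ε : ℝ} (hf : BddAbove (range f)) (hg : BddAbove (range g))
    (hfg : ∀ x, |f x - g x| ≤ ε) : |(⨆ x, f x) - ⨆ x, g x| ≤ ε := by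
  rw [abs_sub_le_iff]
  constructor
  · have : (⨆ x, f x) ≤ (⨆ x, g x) + ε :=
      ciSup_le fun x => by have := abs_sub_le_iff.mp (hfg x)
                           have := le_ciSup hg x; linarith [this]
    linarith
  · have : (⨆ x, g x) ≤ (⨆ x, f x) + ε :=
      ciSup_le fun x => by have := abs_sub_le_iff.mp (hfg x)
                           have := le_ciSup hf x; linarith [this]
    linarith

lemma abs_ciInf_sub {f g : X → ℝ} {ε : ℝ} (hf : BddBelow (range f)) (hg : BddBelow (range g))
    (hfg : ∀ x, |f x - g x| ≤ ε) : |(⨅ x, f x) - ⨅ x, g x| ≤ ε := by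
  rw [abs_sub_le_iff]
  constructor
  · have : (⨅ x, f x) ≤ (⨅ x, g x) + ε := by
      have : ∀ x, (⨅ x, f x) - ε ≤ g x := fun x => by
        have h1 := abs_sub_le_iff.mp (hfg x)
        have h2 := ciInf_le hf x; linarith [h1.1]
      have := le_ciInf this; linarith
    linarith
  · have : (⨅ x, g x) ≤ (⨅ x, f x) + ε := by
      have : ∀ x, (⨅ x, g x) - ε ≤ f x := fun x => by
        have h1 := abs_sub_le_iff.mp (hfg x)
        have h2 := ciInf_le hg x; linarith [h1.2]
      have := le_ciInf this; linarith
    linarith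

lemma integrable_osc (hc : ContinuousOn (fun p : ℝ × X => h p.1 p.2) (Icc 0 1 ×ˢ univ)) :
    IntervalIntegrable (fun t => (⨆ x, h t x) - ⨅ x, h t x) volume 0 1 :=
  by
    apply ContinuousOn.intervalIntegrable
    rw [uIcc_of_le zero_le_one]
    exact (contOn_iSup hc).sub (contOn_iInf hc)

lemma integrable_tslice (hc : ContinuousOn (fun p : ℝ × X => h p.1 p.2) (Icc 0 1 ×ˢ univ))
    (x : X) : IntervalIntegrable (fun t => h t x) volume 0 1 :=
  by
    apply ContinuousOn.intervalIntegrable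
    rw [uIcc_of_le zero_le_one]
    exact tslice_cont hc x

end

section
variable {X : Type*} [TopologicalSpace X] [CompactSpace X] [Nonempty X]
variable {h : ℝ → X → ℝ}

lemma forward_dir (hc : ContinuousOn (fun p : ℝ × X => h p.1 p.2) (Icc 0 1 ×ˢ univ))
    {xp xm : X} (hx : ∀ t ∈ Icc (0:ℝ) 1, h t xp = (⨆ x, h t x) ∧ h t xm = (⨅ x, h t x))
    (G : ℝ → X → ℝ) (Gc : ContinuousOn (fun p : ℝ × X => G p.1 p.2) (Icc 0 1 ×ˢ univ))
    (Gn : ∀ x : X, (∫ t in (0:ℝ)..1, G t x) = 0) (s : ℝ) :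
    hoferNorm h ≤ hoferNorm (fun t x => h t x - s * G t x) := by
  set u : ℝ → X → ℝ := fun t x => h t x - s * G t x with hu
  have uc : ContinuousOn (fun p : ℝ × X => u p.1 p.2) (Icc 0 1 ×ˢ univ) :=
    hc.sub (continuousOn_const.mul Gc)
  have key : ∀ t ∈ Icc (0:ℝ) 1,
      (h t xp - h t xm) - s * (G t xp - G t xm) ≤ (⨆ x, u t x) - ⨅ x, u t x := by
    intro t ht
    have h1 : u t xp ≤ ⨆ x, u t x := le_iSup_slice uc ht xp
    have h2 : (⨅ x, u t x) ≤ u t xm := iInf_le_slice uc ht xm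
    simp only [hu] at h1 h2 ⊢
    ring_nf
    ring_nf at h1 h2
    linarith
  have hint1 : IntervalIntegrable
      (fun t => (h t xp - h t xm) - s * (G t xp - G t xm)) volume 0 1 :=
    ((integrable_tslice hc xp).sub (integrable_tslice hc xm)).sub
      (((integrable_tslice Gc xp).sub (integrable_tslice Gc xm)).const_mul s)
  have hmono := intervalIntegral.integral_mono_on zero_le_one hint1 (integrable_osc uc) key
  have hcalc : (∫ t in (0:ℝ)..1, ((h t xp - h t xm) - s * (G t xp - G t xm)))
      = hoferNorm h := by
    rw [intervalIntegral.integral_sub ((integrable_tslice hc xp).sub (integrable_tslice hc xm))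
      (((integrable_tslice Gc xp).sub (integrable_tslice Gc xm)).const_mul s),
      intervalIntegral.integral_const_mul,
      intervalIntegral.integral_sub (integrable_tslice Gc xp) (integrable_tslice Gc xm),
      Gn xp, Gn xm]
    have : (∫ t in (0:ℝ)..1, (h t xp - h t xm)) = hoferNorm h := by
      apply intervalIntegral.integral_congr
      intro t ht
      rw [uIcc_of_le zero_le_one] at ht
      obtain ⟨e1, e2⟩ := hx t ht
      simp [e1, e2]
    simp only [sub_zero, sub_self, mul_zero]
    exact this
  rw [hcalc] at hmono
  exact hmono

end

section
variable {X : Type*} [TopologicalSpace X] [CompactSpace X] [Nonempty X]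
variable {h : ℝ → X → ℝ}

/-- The continuous map `(x, p) ↦ h p x - M p` on `X × W` for `W ⊆ Icc 0 1` compact. -/
noncomputable def fatCM (hc : ContinuousOn (fun p : ℝ × X => h p.1 p.2) (Icc 0 1 ×ˢ univ))
    {W : Set ℝ} (hWsub : W ⊆ Icc 0 1) : C(X × W, ℝ) :=
  ⟨fun q => h q.2 q.1 - ⨆ y, h (q.2 : ℝ) y, by
    have c1 : Continuous fun q : X × W => ((q.2 : ℝ), q.1) :=
      (continuous_subtype_val.comp continuous_snd).prodMk continuous_fst
    have e1 : Continuous fun q : X × W => h q.2 q.1 :=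
      hc.comp_continuous c1 (fun q => ⟨hWsub q.2.2, mem_univ _⟩)
    have e2 : Continuous fun q : X × W => (⨆ y, h (q.2 : ℝ) y) :=
      (contOn_iSup hc).comp_continuous (continuous_subtype_val.comp continuous_snd)
        (fun q => hWsub q.2.2)
    exact e1.sub e2⟩

lemma fat_cont (hc : ContinuousOn (fun p : ℝ × X => h p.1 p.2) (Icc 0 1 ×ˢ univ))
    {W : Set ℝ} (hW : IsCompact W) (hWne : W.Nonempty) (hWsub : W ⊆ Icc 0 1) :
    Continuous fun x => ⨆ p : W, (h p x - ⨆ y, h (p : ℝ) y) := by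
  haveI : CompactSpace W := isCompact_iff_compactSpace.mp hW
  haveI : Nonempty W := hWne.to_subtype
  exact continuous_iSup_comp (fatCM hc hWsub)

lemma fat_bddAbove (hc : ContinuousOn (fun p : ℝ × X => h p.1 p.2) (Icc 0 1 ×ˢ univ))
    {W : Set ℝ} (hW : IsCompact W) (hWne : W.Nonempty) (hWsub : W ⊆ Icc 0 1) (x : X) :
    BddAbove (range fun p : W => (h p x - ⨆ y, h (p : ℝ) y)) := by
  haveI : CompactSpace W := isCompact_iff_compactSpace.mp hW
  haveI : Nonempty W := hWne.to_subtype
  have : Continuous fun p : W => (fatCM hc hWsub) (x, p) :=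
    (fatCM hc hWsub).continuous.comp (continuous_const.prodMk continuous_id)
  exact (isCompact_range this).bddAbove

end

namespace HoferBump

noncomputable def c0 (l : ℝ) : ℝ → ℝ := fun t => max 0 (min t (l - t))

lemma c0_cont (l : ℝ) : Continuous (c0 l) :=
  continuous_const.max (continuous_id.min (continuous_const.sub continuous_id))

lemma c0_nonneg (l t : ℝ) : 0 ≤ c0 l t := le_max_left _ _

lemma c0_le (l t : ℝ) (hl : 0 ≤ l) : c0 l t ≤ l := by
  unfold c0
  apply max_le hl
  rcases le_total t l with hh | hh
  · exact le_trans (min_le_left _ _) hh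
  · exact le_trans (min_le_right _ _) (by linarith)

lemma c0_zero_left (l t : ℝ) (ht : t ≤ 0) : c0 l t = 0 := by
  unfold c0; rw [max_eq_left]; exact le_trans (min_le_left _ _) ht

lemma c0_zero_right (l t : ℝ) (ht : l ≤ t) : c0 l t = 0 := by
  unfold c0; rw [max_eq_left]; exact le_trans (min_le_right _ _) (by linarith)

lemma c0_int (l : ℝ) : IntervalIntegrable (c0 l) MeasureTheory.volume 0 l :=
  (c0_cont l).intervalIntegrable _ _

lemma c0_integral_pos {l : ℝ} (hl : 0 < l) : 0 < ∫ t in (0:ℝ)..l, c0 l t := by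
  have i1 : IntervalIntegrable (c0 l) MeasureTheory.volume 0 (l/4) :=
    (c0_cont l).intervalIntegrable _ _
  have i2 : IntervalIntegrable (c0 l) MeasureTheory.volume (l/4) (3*l/4) :=
    (c0_cont l).intervalIntegrable _ _
  have i3 : IntervalIntegrable (c0 l) MeasureTheory.volume (3*l/4) l :=
    (c0_cont l).intervalIntegrable _ _
  have e1 := intervalIntegral.integral_add_adjacent_intervals i1 i2
  have e2 := intervalIntegral.integral_add_adjacent_intervals (i1.trans i2) i3
  have n1 : (0:ℝ) ≤ ∫ t in (0:ℝ)..(l/4), c0 l t :=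
    intervalIntegral.integral_nonneg (by linarith) (fun u _ => c0_nonneg l u)
  have n3 : (0:ℝ) ≤ ∫ t in (3*l/4)..l, c0 l t :=
    intervalIntegral.integral_nonneg (by linarith) (fun u _ => c0_nonneg l u)
  have n2 : l/4 * (l/2) ≤ ∫ t in (l/4)..(3*l/4), c0 l t := by
    have hmono := intervalIntegral.integral_mono_on (μ := MeasureTheory.volume)
      (f := fun _ => l/4) (g := c0 l) (by linarith)
      (intervalIntegrable_const) i2 ?_
    · rw [intervalIntegral.integral_const] at hmono
      have : (3*l/4 - l/4) • (l/4) = l/4 * (l/2) := by push_cast [smul_eq_mul]; ring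
      linarith [this ▸ hmono]
    · intro u hu
      obtain ⟨h1, h2⟩ := hu
      unfold c0
      have : l/4 ≤ min u (l - u) := le_min (by linarith) (by linarith)
      exact le_trans this (le_max_right _ _)
  have : 0 < l/4 * (l/2) := by positivity
  linarith [e1 ▸ e2]

lemma c0_shift_integral {l a : ℝ} (hl : 0 < l) (ha : 0 ≤ a) (hal : a + l ≤ 1) :
    ∫ t in (0:ℝ)..1, c0 l (t - a) = ∫ t in (0:ℝ)..l, c0 l t := by
  rw [intervalIntegral.integral_comp_sub_right (c0 l) a]
  have i1 : IntervalIntegrable (c0 l) MeasureTheory.volume (0-a) 0 :=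
    (c0_cont l).intervalIntegrable _ _
  have i2 : IntervalIntegrable (c0 l) MeasureTheory.volume 0 l :=
    (c0_cont l).intervalIntegrable _ _
  have i3 : IntervalIntegrable (c0 l) MeasureTheory.volume l (1-a) :=
    (c0_cont l).intervalIntegrable _ _
  have z1 : ∫ t in (0-a)..0, c0 l t = 0 := by
    have : EqOn (c0 l) (fun _ => (0:ℝ)) (uIcc (0-a) 0) := by
      intro u hu
      rw [uIcc_of_le (by linarith)] at hu
      exact c0_zero_left l u hu.2
    rw [intervalIntegral.integral_congr this]; simp
  have z3 : ∫ t in l..(1-a), c0 l t = 0 := by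
    have : EqOn (c0 l) (fun _ => (0:ℝ)) (uIcc l (1-a)) := by
      intro u hu
      rw [uIcc_of_le (by linarith)] at hu
      exact c0_zero_right l u hu.1
    rw [intervalIntegral.integral_congr this]; simp
  have e1 := intervalIntegral.integral_add_adjacent_intervals i1 i2
  have e2 := intervalIntegral.integral_add_adjacent_intervals (i1.trans i2) i3
  rw [← e2, ← e1, z1, z3]; ring

end HoferBump
section
variable {X : Type*} [TopologicalSpace X] [CompactSpace X] [Nonempty X]
variable {h : ℝ → X → ℝ}

lemma exists_max_point (hc : ContinuousOn (fun p : ℝ × X => h p.1 p.2) (Icc 0 1 ×ˢ univ))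
    (crit : ∀ G : ℝ → X → ℝ,
        ContinuousOn (fun p : ℝ × X => G p.1 p.2) (Icc 0 1 ×ˢ univ) →
        (∀ x : X, (∫ t in (0:ℝ)..1, G t x) = 0) →
        ∀ s : ℝ, hoferNorm h ≤ hoferNorm (fun t x => h t x - s * G t x)) :
    ∃ xp : X, ∀ t ∈ Icc (0:ℝ) 1, h t xp = ⨆ x, h t x := by
  by_contra hnx
  push_neg at hnx
  obtain ⟨M, hM⟩ : ∃ M : ℝ → ℝ, M = fun t => ⨆ x, h t x := ⟨_, rfl⟩
  obtain ⟨m, hm⟩ : ∃ m : ℝ → ℝ, m = fun t => ⨅ x, h t x := ⟨_, rfl⟩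
  have hMc : ContinuousOn M (Icc 0 1) := hM ▸ contOn_iSup hc
  have hmc : ContinuousOn m (Icc 0 1) := hm ▸ contOn_iInf hc
  have hle_M : ∀ {t : ℝ}, t ∈ Icc (0:ℝ) 1 → ∀ x, h t x ≤ M t := by
    intro t ht x; rw [hM]; exact le_iSup_slice hc ht x
  have hm_le : ∀ {t : ℝ}, t ∈ Icc (0:ℝ) 1 → ∀ x, m t ≤ h t x := by
    intro t ht x; rw [hm]; exact iInf_le_slice hc ht x
  -- Step 1: a threshold δ₀ such that no point maximizes at all times with oscillation ≥ δ₀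
  have step1 : ∃ δ₀ > 0, ∀ x : X, ∃ t ∈ Icc (0:ℝ) 1, δ₀ ≤ M t - m t ∧ h t x ≠ M t := by
    by_contra hno
    push_neg at hno
    obtain ⟨Fs, hFs⟩ : ∃ Fs : ℕ → Set X, Fs = fun (k : ℕ) =>
        ⋂ (t : ℝ) (_ : t ∈ Icc (0:ℝ) 1 ∧ 1/((k:ℝ)+1) ≤ M t - m t), {x : X | h t x = M t} :=
      ⟨_, rfl⟩
    have hFsmem : ∀ k x, x ∈ Fs k ↔ ∀ t : ℝ, t ∈ Icc (0:ℝ) 1 ∧ 1/((k:ℝ)+1) ≤ M t - m t →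
        h t x = M t := by
      intro k x; rw [hFs]; simp only [mem_iInter, mem_setOf_eq]
    have hdec : ∀ k, Fs (k+1) ⊆ Fs k := by
      intro k x hx
      rw [hFsmem] at hx ⊢
      intro t ⟨ht, hosc⟩
      refine hx t ⟨ht, le_trans ?_ hosc⟩
      apply one_div_le_one_div_of_le (by positivity)
      push_cast; linarith
    have hcl : ∀ k, IsClosed (Fs k) := by
      intro k
      rw [hFs]
      exact isClosed_iInter fun t => isClosed_iInter fun ht =>
        isClosed_eq (slice_cont hc ht.1) continuous_const
    have hne : ∀ k, (Fs k).Nonempty := by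
      intro k
      obtain ⟨x, hx⟩ := hno (1/((k:ℝ)+1)) (by positivity)
      refine ⟨x, ?_⟩
      rw [hFsmem]
      intro t ⟨ht, hosc⟩
      exact hx t ht hosc
    obtain ⟨x0, hx0⟩ := IsCompact.nonempty_iInter_of_sequence_nonempty_isCompact_isClosed
      Fs hdec hne ((hcl 0).isCompact) hcl
    obtain ⟨t, ht, hneq⟩ := hnx x0
    rw [show (⨆ x, h t x) = M t by rw [hM]] at hneq
    rcases le_or_gt (M t - m t) 0 with hosc | hosc
    · have h1 := hle_M ht x0
      have h2 := hm_le ht x0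
      exact hneq (by linarith)
    · obtain ⟨k, hk⟩ := exists_nat_one_div_lt hosc
      have := (hFsmem k x0).mp (mem_iInter.mp hx0 k) t ⟨ht, hk.le⟩
      exact hneq this
  obtain ⟨δ₀, hδ₀, hT⟩ := step1
  set T : Set ℝ := {t | t ∈ Icc (0:ℝ) 1 ∧ δ₀ ≤ M t - m t} with hTdef
  -- Step 2: finitely many times in T whose argmax sets have empty intersection
  have step2 : ∃ J : Finset T, J.Nonempty ∧ (⋂ i ∈ J, {x : X | h (i:ℝ) x = M i}) = ∅ := by
    have hinter : (univ : Set X) ∩ ⋂ i : T, {x : X | h (i:ℝ) x = M i} = ∅ := by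
      rw [univ_inter, eq_empty_iff_forall_notMem]
      intro x hx
      rw [mem_iInter] at hx
      obtain ⟨t, ht, hosc, hne⟩ := hT x
      exact hne (hx ⟨t, ht, hosc⟩)
    obtain ⟨J, hJ⟩ := IsCompact.elim_finite_subfamily_closed isCompact_univ
      (fun i : T => {x : X | h (i:ℝ) x = M i})
      (fun i => isClosed_eq (slice_cont hc i.2.1) continuous_const) hinter
    rw [univ_inter] at hJ
    refine ⟨J, ?_, hJ⟩
    by_contra hJe
    rw [Finset.not_nonempty_iff_eq_empty] at hJe
    rw [hJe] at hJ
    simp only [Finset.notMem_empty, iInter_of_empty, iInter_univ] at hJ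
    exact (univ_nonempty (α := X)).ne_empty hJ
  obtain ⟨J, hJne, hJ⟩ := step2
  -- modulus of continuity
  obtain ⟨δm, hδm, hmod⟩ := modulus hc (show (0:ℝ) < δ₀/8 by linarith)
  have hMmod : ∀ t ∈ Icc (0:ℝ) 1, ∀ t' ∈ Icc (0:ℝ) 1, |t - t'| ≤ δm → |M t - M t'| ≤ δ₀/8 := by
    intro t ht t' ht' htt
    rw [hM]
    exact abs_ciSup_sub (bddAbove_slice hc ht) (bddAbove_slice hc ht') (hmod t ht t' ht' htt)
  have hmmod : ∀ t ∈ Icc (0:ℝ) 1, ∀ t' ∈ Icc (0:ℝ) 1, |t - t'| ≤ δm → |m t - m t'| ≤ δ₀/8 := by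
    intro t ht t' ht' htt
    rw [hm]
    exact abs_ciInf_sub (bddBelow_slice hc ht) (bddBelow_slice hc ht') (hmod t ht t' ht' htt)
  -- window sets and fattened argmax functions
  obtain ⟨W, hW⟩ : ∃ W : T → ℝ → Set ℝ,
      W = fun (i : T) (ρ : ℝ) => Icc (0:ℝ) 1 ∩ Icc ((i:ℝ) - ρ) ((i:ℝ) + ρ) := ⟨_, rfl⟩
  have hWsub : ∀ (i : T) (ρ : ℝ), W i ρ ⊆ Icc (0:ℝ) 1 := by
    intro i ρ; rw [hW]; exact inter_subset_left
  have hWcpt : ∀ (i : T) (ρ : ℝ), IsCompact (W i ρ) := by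
    intro i ρ; rw [hW]; exact isCompact_Icc.inter_right isClosed_Icc
  have hWne : ∀ (i : T) {ρ : ℝ}, 0 ≤ ρ → (W i ρ).Nonempty := by
    intro i ρ hρ
    refine ⟨i, ?_⟩
    rw [hW]
    exact ⟨i.2.1, by constructor <;> [linarith []; linarith []]⟩
  obtain ⟨Fat, hFat⟩ : ∃ Fat : T → ℝ → X → ℝ,
      Fat = fun i ρ x => ⨆ p : W i ρ, (h p x - M p) := ⟨_, rfl⟩
  have hFatc : ∀ (i : T) {ρ : ℝ}, 0 ≤ ρ → Continuous (Fat i ρ) := by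
    intro i ρ hρ
    rw [hFat, hM]
    exact fat_cont hc (hWcpt i ρ) (hWne i hρ) (hWsub i ρ)
  have hFatle : ∀ (i : T) {ρ : ℝ}, 0 ≤ ρ → ∀ x (c : ℝ),
      (∀ p ∈ W i ρ, h p x - M p ≤ c) → Fat i ρ x ≤ c := by
    intro i ρ hρ x c hcle
    rw [hFat]
    haveI : Nonempty (W i ρ) := (hWne i hρ).to_subtype
    exact ciSup_le fun p => hcle p p.2
  have hFatge : ∀ (i : T) {ρ : ℝ}, 0 ≤ ρ → ∀ x, ∀ p ∈ W i ρ,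
      h p x - M p ≤ Fat i ρ x := by
    intro i ρ hρ x p hp
    rw [hFat]
    haveI : Nonempty (W i ρ) := (hWne i hρ).to_subtype
    have hb : BddAbove (range fun p : W i ρ => (h p x - M p)) := by
      rw [hM]; exact fat_bddAbove hc (hWcpt i ρ) (hWne i hρ) (hWsub i ρ) x
    exact le_ciSup hb ⟨p, hp⟩
  -- Step 3: a small fattening parameter with empty intersection
  have hWmono : ∀ (i : T) {ρ ρ' : ℝ}, ρ ≤ ρ' → W i ρ ⊆ W i ρ' := by
    intro i ρ ρ' hle
    rw [hW]
    intro p hp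
    exact ⟨hp.1, by constructor <;> [linarith [hp.2.1]; linarith [hp.2.2]]⟩
  have hFatmono : ∀ (i : T) {ρ ρ' : ℝ}, 0 ≤ ρ → ρ ≤ ρ' → ∀ x, Fat i ρ x ≤ Fat i ρ' x := by
    intro i ρ ρ' hρ hle x
    refine hFatle i hρ x _ fun p hp => ?_
    exact hFatge i (le_trans hρ hle) x p (hWmono i hle hp)
  have hFatwit : ∀ (i : T) {ρ : ℝ}, 0 ≤ ρ → ∀ (x : X) (c : ℝ), c < Fat i ρ x →
      ∃ p ∈ W i ρ, c < h p x - M p := by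
    intro i ρ hρ x c hlt
    rw [hFat] at hlt
    haveI : Nonempty (W i ρ) := (hWne i hρ).to_subtype
    obtain ⟨p, hp⟩ := exists_lt_of_lt_ciSup hlt
    exact ⟨p, p.2, hp⟩
  have step3 : ∃ ρ > 0, ρ ≤ δ₀/8 ∧ 2*ρ ≤ δm ∧ ρ ≤ 1 ∧
      (⋂ i ∈ J, {x : X | -ρ ≤ Fat i ρ x}) = ∅ := by
    obtain ⟨C, hC⟩ : ∃ C : ℕ → Set X, C = fun (k : ℕ) =>
        ⋂ i ∈ J, {x : X | -(1/((k:ℝ)+1)) ≤ Fat i (1/((k:ℝ)+1)) x} := ⟨_, rfl⟩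
    have hkey : ∃ k₀, C k₀ = ∅ := by
      by_contra hno
      push_neg at hno
      have hne : ∀ k, (C k).Nonempty := hno
      have hcl : ∀ k, IsClosed (C k) := by
        intro k
        rw [hC]
        exact isClosed_biInter fun i _ =>
          isClosed_le continuous_const (hFatc i (by positivity))
      have hdec : ∀ k, C (k+1) ⊆ C k := by
        intro k x hx
        rw [hC, mem_iInter₂] at hx ⊢
        intro i hi
        have h1 : (1:ℝ)/((k:ℝ)+1+1) ≤ 1/((k:ℝ)+1) :=
          one_div_le_one_div_of_le (by positivity) (by linarith)
        have h2 := hx i hi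
        simp only [mem_setOf_eq] at h2 ⊢
        have h3 := hFatmono i (by positivity) (by push_cast; linarith) x
          (ρ := 1/((k:ℝ)+1+1)) (ρ' := 1/((k:ℝ)+1))
        calc -(1/((k:ℝ)+1)) ≤ -(1/((k:ℝ)+1+1)) := by linarith
        _ ≤ Fat i (1/((k:ℝ)+1+1)) x := by push_cast at h2 ⊢; linarith
        _ ≤ Fat i (1/((k:ℝ)+1)) x := by push_cast at h3 ⊢; linarith
      obtain ⟨x0, hx0⟩ := IsCompact.nonempty_iInter_of_sequence_nonempty_isCompact_isClosed
        C hdec hne ((hcl 0).isCompact) hcl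
      -- x0 maximizes h at every i ∈ J, contradiction
      have hmax : ∀ i ∈ J, h (i:ℝ) x0 = M i := by
        intro i hi
        have hup : ∀ k : ℕ, ∃ p ∈ W i (1/((k:ℝ)+1)),
            -(2/((k:ℝ)+1)) < h p x0 - M p := by
          intro k
          have hx0k := mem_iInter.mp hx0 k
          rw [hC, mem_iInter₂] at hx0k
          have h2 := hx0k i hi
          simp only [mem_setOf_eq] at h2
          refine hFatwit i (by positivity) x0 _ (lt_of_lt_of_le ?_ h2)
          have : (0:ℝ) < 1/((k:ℝ)+1) := by positivity
          have h4 : 2/((k:ℝ)+1) = 2*(1/((k:ℝ)+1)) := by ring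
          linarith
        choose p hpW hpgt using hup
        have hpIcc : ∀ k, p k ∈ Icc (0:ℝ) 1 := fun k => (hWsub i _) (hpW k)
        have hpdist : ∀ k, |p k - (i:ℝ)| ≤ 1/((k:ℝ)+1) := by
          intro k
          have := hpW k
          rw [hW] at this
          rw [abs_le]
          constructor <;> [linarith [this.2.1]; linarith [this.2.2]]
        have hptend : Filter.Tendsto p Filter.atTop (nhds (i:ℝ)) := by
          rw [tendsto_iff_dist_tendsto_zero]
          exact squeeze_zero (fun k => dist_nonneg)
            (fun k => by rw [Real.dist_eq]; exact hpdist k)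
            tendsto_one_div_add_atTop_nhds_zero_nat
        have hptendW : Filter.Tendsto p Filter.atTop (nhdsWithin (i:ℝ) (Icc 0 1)) :=
          tendsto_nhdsWithin_of_tendsto_nhds_of_eventually_within p hptend
            (Filter.Eventually.of_forall hpIcc)
        have htend1 : Filter.Tendsto (fun k => h (p k) x0 - M (p k)) Filter.atTop
            (nhds (h (i:ℝ) x0 - M i)) := by
          apply Filter.Tendsto.sub
          · exact ((tslice_cont hc x0 (i:ℝ) i.2.1).tendsto).comp hptendW
          · exact ((hMc (i:ℝ) i.2.1).tendsto).comp hptendW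
        have htend2 : Filter.Tendsto (fun k : ℕ => -(2/((k:ℝ)+1))) Filter.atTop
            (nhds 0) := by
          have : Filter.Tendsto (fun k : ℕ => (1:ℝ)/((k:ℝ)+1)) Filter.atTop (nhds 0) :=
            tendsto_one_div_add_atTop_nhds_zero_nat
          have h2 := this.const_mul (-2)
          simp only [mul_zero] at h2
          convert h2 using 2 with k
          ring
        have hge : 0 ≤ h (i:ℝ) x0 - M i :=
          le_of_tendsto_of_tendsto' htend2 htend1 fun k => (hpgt k).le
        have hle := hle_M i.2.1 x0
        linarith
      rw [eq_empty_iff_forall_notMem] at hJ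
      exact hJ x0 (mem_iInter₂.mpr fun i hi => hmax i hi)
    obtain ⟨k₀, hk₀⟩ := hkey
    have hposmin : (0:ℝ) < min (δ₀/8) (min (δm/2) 1) := by
      apply lt_min (by linarith) (lt_min (by linarith) one_pos)
    obtain ⟨k₁, hk₁⟩ := exists_nat_one_div_lt hposmin
    have hKpos : (0:ℝ) < ((max k₀ k₁ : ℕ):ℝ)+1 := by positivity
    have hKk₁ : 1/(((max k₀ k₁ : ℕ):ℝ)+1) ≤ 1/((k₁:ℝ)+1) := by
      apply one_div_le_one_div_of_le (by positivity)
      have : (k₁:ℝ) ≤ ((max k₀ k₁ : ℕ):ℝ) := by exact_mod_cast le_max_right k₀ k₁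
      linarith
    have hKk₀ : 1/(((max k₀ k₁ : ℕ):ℝ)+1) ≤ 1/((k₀:ℝ)+1) := by
      apply one_div_le_one_div_of_le (by positivity)
      have : (k₀:ℝ) ≤ ((max k₀ k₁ : ℕ):ℝ) := by exact_mod_cast le_max_left k₀ k₁
      linarith
    have hm1 : min (δ₀/8) (min (δm/2) 1) ≤ δ₀/8 := min_le_left _ _
    have hm2 : min (δ₀/8) (min (δm/2) 1) ≤ δm/2 := le_trans (min_le_right _ _) (min_le_left _ _)
    have hm3 : min (δ₀/8) (min (δm/2) 1) ≤ 1 := le_trans (min_le_right _ _) (min_le_right _ _)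
    refine ⟨1/(((max k₀ k₁ : ℕ):ℝ)+1), by positivity, by linarith, by linarith, by linarith, ?_⟩
    rw [eq_empty_iff_forall_notMem]
    intro x hx
    rw [mem_iInter₂] at hx
    have hxC : x ∈ C k₀ := by
      rw [hC, mem_iInter₂]
      intro i hi
      have h1 := hx i hi
      simp only [mem_setOf_eq] at h1 ⊢
      have h2 := hFatmono i (by positivity) hKk₀ x
      linarith
    rw [hk₀] at hxC
    exact hxC
  obtain ⟨ρ, hρ, hρδ, hρm, hρ1, hempty⟩ := step3
  -- the bump data
  obtain ⟨l, hldef⟩ : ∃ l : ℝ, l = ρ/4 := ⟨_, rfl⟩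
  have hl : 0 < l := by rw [hldef]; positivity
  obtain ⟨a, haa⟩ : ∃ a : T → ℝ, a = fun (i : T) => if (i:ℝ) + l ≤ 1 then (i:ℝ) else (i:ℝ) - l :=
    ⟨_, rfl⟩
  have ha : ∀ i : T, 0 ≤ a i ∧ a i + l ≤ 1 ∧ |a i - i| ≤ l := by
    intro i
    obtain ⟨⟨hi0, hi1⟩, -⟩ := i.2
    rw [haa]
    dsimp only
    split_ifs with hsp
    · exact ⟨hi0, hsp, by simp; linarith⟩
    · constructor
      · push_neg at hsp; linarith
      · constructor
        · linarith
        · rw [abs_le]; constructor <;> linarith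
  obtain ⟨κ, hκdef⟩ : ∃ κ : ℝ, κ = ∫ t in (0:ℝ)..l, HoferBump.c0 l t := ⟨_, rfl⟩
  have hκ : 0 < κ := hκdef ▸ HoferBump.c0_integral_pos hl
  obtain ⟨N, hNdef⟩ : ∃ N : ℝ, N = (J.card : ℝ) := ⟨_, rfl⟩
  have hN : 1 ≤ N := by
    rw [hNdef]
    exact_mod_cast Nat.one_le_iff_ne_zero.mpr (Finset.card_ne_zero_of_mem hJne.choose_spec)
  obtain ⟨f, hf⟩ : ∃ f : T → X → ℝ,
      f = fun i x => max 0 (min 1 ((Fat i ρ x + 2*ρ)/ρ)) := ⟨_, rfl⟩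
  have hf01 : ∀ i x, 0 ≤ f i x ∧ f i x ≤ 1 := by
    intro i x
    rw [hf]
    exact ⟨le_max_left _ _, max_le (by norm_num) (min_le_left _ _)⟩
  have hfc : ∀ i : T, Continuous (f i) := by
    intro i
    rw [hf]
    exact continuous_const.max (continuous_const.min
      ((((hFatc i hρ.le).add continuous_const).div_const ρ)))
  have hf_one : ∀ i x, -ρ ≤ Fat i ρ x → f i x = 1 := by
    intro i x hx
    rw [hf]
    dsimp only
    have h1 : (1:ℝ) ≤ (Fat i ρ x + 2*ρ)/ρ := by rw [le_div_iff₀ hρ]; linarith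
    rw [min_eq_left h1, max_eq_right (by norm_num : (0:ℝ) ≤ 1)]
  have hf_lt_one : ∀ i x, Fat i ρ x < -ρ → f i x < 1 := by
    intro i x hx
    rw [hf]
    dsimp only
    apply max_lt (by norm_num)
    apply lt_of_le_of_lt (min_le_right _ _)
    rw [div_lt_iff₀ hρ]; linarith
  have hf_zero : ∀ i x, Fat i ρ x ≤ -(2*ρ) → f i x = 0 := by
    intro i x hx
    rw [hf]
    dsimp only
    rw [max_eq_left]
    refine le_trans (min_le_right _ _) ?_
    apply div_nonpos_of_nonpos_of_nonneg <;> linarith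
  obtain ⟨v, hv⟩ : ∃ v : T → X → ℝ,
      v = fun j x => N * f j x - ∑ i ∈ J, f i x := ⟨_, rfl⟩
  have hvc : ∀ j : T, Continuous (v j) := by
    intro j
    rw [hv]
    exact (continuous_const.mul (hfc j)).sub (continuous_finset_sum J fun i _ => hfc i)
  have hvbound : ∀ j x, |v j x| ≤ 2*N := by
    intro j x
    rw [hv, abs_le]
    dsimp only
    have h1 := hf01 j x
    have h2 : 0 ≤ ∑ i ∈ J, f i x := Finset.sum_nonneg fun i _ => (hf01 i x).1
    have h3 : ∑ i ∈ J, f i x ≤ N := by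
      rw [hNdef]
      calc ∑ i ∈ J, f i x ≤ ∑ i ∈ J, 1 := Finset.sum_le_sum fun i _ => (hf01 i x).2
      _ = (J.card : ℝ) := by simp
    constructor <;> nlinarith
  have hvsum : ∀ x, ∑ j ∈ J, v j x = 0 := by
    intro x
    rw [hv]
    dsimp only
    rw [Finset.sum_sub_distrib, ← Finset.mul_sum, Finset.sum_const, nsmul_eq_mul, hNdef]
    exact sub_self _
  -- uniform positivity on fattened argmax sets
  have hvpos : ∀ j ∈ J, ∀ x, -ρ ≤ Fat j ρ x → 0 < v j x := by
    intro j hj x hx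
    have hf1 : f j x = 1 := hf_one j x hx
    have hex : ∃ i₀ ∈ J, ¬ (-ρ ≤ Fat i₀ ρ x) := by
      by_contra hall
      push_neg at hall
      have : x ∈ ⋂ i ∈ J, {x : X | -ρ ≤ Fat i ρ x} :=
        mem_iInter₂.mpr fun i hi => hall i hi
      rw [hempty] at this
      exact this
    obtain ⟨i₀, hi₀J, hi₀⟩ := hex
    push_neg at hi₀
    have hflt : f i₀ x < 1 := hf_lt_one i₀ x hi₀
    have hsum : ∑ i ∈ J, f i x < N := by
      rw [hNdef]
      calc ∑ i ∈ J, f i x < ∑ i ∈ J, 1 :=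
        Finset.sum_lt_sum (fun i _ => (hf01 i x).2) ⟨i₀, hi₀J, hflt⟩
      _ = (J.card : ℝ) := by simp
    rw [hv]
    dsimp only
    rw [hf1]
    linarith
  have hβ : ∃ β > 0, ∀ j ∈ J, ∀ x, -ρ ≤ Fat j ρ x → β ≤ v j x := by
    have hper : ∀ j : T, j ∈ J → ∃ βj, 0 < βj ∧ ∀ x, -ρ ≤ Fat j ρ x → βj ≤ v j x := by
      intro j hj
      have hA : IsCompact {x : X | -ρ ≤ Fat j ρ x} :=
        (isClosed_le continuous_const (hFatc j hρ.le)).isCompact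
      have hAne : {x : X | -ρ ≤ Fat j ρ x}.Nonempty := by
        obtain ⟨x0, hx0⟩ := exists_max_slice hc j.2.1
        refine ⟨x0, ?_⟩
        simp only [mem_setOf_eq]
        have hWj : (j:ℝ) ∈ W j ρ := by
          rw [hW]
          exact ⟨j.2.1, by constructor <;> linarith⟩
        have := hFatge j hρ.le x0 (j:ℝ) hWj
        have hx0' : h (j:ℝ) x0 = M j := by rw [hM]; exact hx0
        rw [hx0'] at this
        linarith
      obtain ⟨x₀, hx₀A, hx₀min⟩ := hA.exists_isMinOn hAne (hvc j).continuousOn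
      refine ⟨v j x₀, hvpos j hj x₀ hx₀A, fun x hx => hx₀min hx⟩
    choose! βf hβf using hper
    refine ⟨J.inf' hJne βf, ?_, ?_⟩
    · show (0:ℝ) < J.inf' hJne βf
      rw [Finset.lt_inf'_iff]
      exact fun j hj => (hβf j hj).1
    · intro j hj x hx
      exact le_trans (Finset.inf'_le βf hj) ((hβf j hj).2 x hx)
  obtain ⟨β, hβpos, hβle⟩ := hβ
  -- the perturbation G
  obtain ⟨G, hG⟩ : ∃ G : ℝ → X → ℝ,
      G = fun t x => ∑ i ∈ J, (HoferBump.c0 l (t - a i) / κ) * v i x := ⟨_, rfl⟩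
  have hGc : Continuous (fun p : ℝ × X => G p.1 p.2) := by
    rw [hG]
    apply continuous_finset_sum
    intro i _
    exact (((HoferBump.c0_cont l).comp (continuous_fst.sub continuous_const)).div_const κ).mul
      ((hvc i).comp continuous_snd)
  have hGnorm : ∀ x : X, (∫ t in (0:ℝ)..1, G t x) = 0 := by
    intro x
    rw [hG]
    have hint : ∀ i ∈ J, IntervalIntegrable
        (fun t => HoferBump.c0 l (t - a i) / κ * v i x) MeasureTheory.volume 0 1 := by
      intro i _
      apply Continuous.intervalIntegrable
      have hcc : Continuous fun t : ℝ => HoferBump.c0 l (t - a i) :=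
        (HoferBump.c0_cont l).comp (continuous_id.sub continuous_const)
      exact (hcc.div_const κ).mul continuous_const
    rw [intervalIntegral.integral_finset_sum hint]
    have hterm : ∀ i ∈ J, (∫ t in (0:ℝ)..1, HoferBump.c0 l (t - a i) / κ * v i x) = v i x := by
      intro i _
      have e : (fun t => HoferBump.c0 l (t - a i) / κ * v i x)
          = fun t => HoferBump.c0 l (t - a i) * (v i x / κ) := by
        funext t; ring
      rw [e, intervalIntegral.integral_mul_const,
        HoferBump.c0_shift_integral hl (ha i).1 (ha i).2.1, ← hκdef]
      field_simp
    rw [Finset.sum_congr rfl hterm, hvsum x]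
  -- the sum of bumps
  obtain ⟨S, hS⟩ : ∃ S : ℝ → ℝ, S = fun t => ∑ i ∈ J, HoferBump.c0 l (t - a i) / κ := ⟨_, rfl⟩
  have hSnonneg : ∀ t, 0 ≤ S t := by
    intro t
    rw [hS]
    exact Finset.sum_nonneg fun i _ => div_nonneg (HoferBump.c0_nonneg l _) hκ.le
  have hSbound : ∀ t, S t ≤ N * l / κ := by
    intro t
    rw [hS]
    calc ∑ i ∈ J, HoferBump.c0 l (t - a i) / κ ≤ ∑ i ∈ J, l / κ :=
      Finset.sum_le_sum fun i _ => (div_le_div_iff_of_pos_right hκ).mpr (HoferBump.c0_le l _ hl.le)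
    _ = N * l / κ := by rw [Finset.sum_const, nsmul_eq_mul, hNdef]; ring
  -- choice of s
  obtain ⟨Smax, hSmaxdef⟩ : ∃ Smax : ℝ, Smax = N * l / κ + 1 := ⟨_, rfl⟩
  have hSmax : 0 < Smax := by
    have h1 : 0 ≤ N * l / κ := div_nonneg (mul_nonneg (by linarith) hl.le) hκ.le
    rw [hSmaxdef]; linarith
  obtain ⟨s, hsdef⟩ : ∃ s : ℝ, s = ρ / ((β + 2*N + 1) * Smax) := ⟨_, rfl⟩
  have hs : 0 < s := by
    rw [hsdef]
    apply div_pos hρ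
    apply mul_pos (by linarith) hSmax
  have hskey : ∀ t, s * S t * (β + 2*N) ≤ ρ := by
    intro t
    have h1 : S t ≤ Smax := by rw [hSmaxdef]; linarith [hSbound t]
    have h2 : s * S t * (β + 2*N) ≤ s * Smax * (β + 2*N + 1) := by
      apply mul_le_mul ?_ (by linarith) (by linarith) ?_
      · exact mul_le_mul_of_nonneg_left h1 hs.le
      · exact mul_nonneg hs.le hSmax.le
    have h3 : s * Smax * (β + 2*N + 1) = ρ := by
      have hD : (0:ℝ) < (β + 2*N + 1) * Smax := mul_pos (by linarith) hSmax
      calc s * Smax * (β + 2*N + 1) = s * ((β + 2*N + 1) * Smax) := by ring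
      _ = ρ := by rw [hsdef]; exact div_mul_cancel₀ _ (ne_of_gt hD)
    linarith
  -- main pointwise estimate
  have hactive : ∀ (i : T) (t : ℝ), t ∈ Icc (0:ℝ) 1 → 0 < HoferBump.c0 l (t - a i) →
      t ∈ W i ρ ∧ |t - (i:ℝ)| ≤ ρ/2 := by
    intro i t ht hpos
    have hz1 : 0 < t - a i := by
      by_contra hz
      push_neg at hz
      rw [HoferBump.c0_zero_left l _ (by linarith)] at hpos
      exact lt_irrefl 0 hpos
    have hz2 : t - a i < l := by
      by_contra hz
      push_neg at hz
      rw [HoferBump.c0_zero_right l _ hz] at hpos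
      exact lt_irrefl 0 hpos
    have habs := abs_le.mp (ha i).2.2
    have hti : |t - (i:ℝ)| ≤ ρ/2 := by
      rw [abs_le]
      constructor <;> linarith [hldef, habs.1, habs.2]
    refine ⟨?_, hti⟩
    rw [hW]
    have h2 := abs_le.mp hti
    exact ⟨ht, by constructor <;> linarith [h2.1, h2.2]⟩
  have main : ∀ t ∈ Icc (0:ℝ) 1,
      (⨆ x, (h t x - s * G t x)) - (⨅ x, (h t x - s * G t x))
        ≤ (M t - m t) - s * β * S t := by
    intro t ht
    have hSt := hSnonneg t
    have hsk := hskey t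
    have ee : s * S t * (β + 2*N) = s*β*S t + s*((2*N)*S t) := by ring
    have hsup : (⨆ x, (h t x - s * G t x)) ≤ M t - s * β * S t := by
      apply ciSup_le
      intro x
      rcases le_or_gt (M t - ρ) (h t x) with hhigh | hlow
      · have hGge : β * S t ≤ G t x := by
          rw [hG, hS, Finset.mul_sum]
          apply Finset.sum_le_sum
          intro i hi
          have hci : 0 ≤ HoferBump.c0 l (t - a i) / κ :=
            div_nonneg (HoferBump.c0_nonneg _ _) hκ.le
          rcases eq_or_lt_of_le (HoferBump.c0_nonneg l (t - a i)) with he | hpos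
          · rw [← he]; simp
          · obtain ⟨htW, -⟩ := hactive i t ht hpos
            have hFx : -ρ ≤ Fat i ρ x := by
              have h1 := hFatge i hρ.le x t htW
              linarith
            have hvix := hβle i hi x hFx
            calc β * (HoferBump.c0 l (t - a i) / κ)
                = (HoferBump.c0 l (t - a i) / κ) * β := by ring
            _ ≤ (HoferBump.c0 l (t - a i) / κ) * v i x :=
                mul_le_mul_of_nonneg_left hvix hci
        have h1 := hle_M ht x
        have h2 : s * (β * S t) ≤ s * G t x := mul_le_mul_of_nonneg_left hGge hs.le
        have e2 : s * (β * S t) = s * β * S t := by ring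
        linarith
      · have hGlb : -((2*N) * S t) ≤ G t x := by
          have e3 : -((2*N) * S t) = ∑ i ∈ J, -((2*N) * (HoferBump.c0 l (t - a i)/κ)) := by
            rw [hS, Finset.mul_sum, ← Finset.sum_neg_distrib]
          rw [e3, hG]
          apply Finset.sum_le_sum
          intro i hi
          have hci : 0 ≤ HoferBump.c0 l (t - a i) / κ :=
            div_nonneg (HoferBump.c0_nonneg _ _) hκ.le
          have hvb := (abs_le.mp (hvbound i x)).1
          calc -((2*N) * (HoferBump.c0 l (t - a i)/κ))
              = (HoferBump.c0 l (t - a i)/κ) * (-(2*N)) := by ring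
          _ ≤ (HoferBump.c0 l (t - a i)/κ) * v i x := mul_le_mul_of_nonneg_left hvb hci
        have h2 : s * (-((2*N) * S t)) ≤ s * G t x := mul_le_mul_of_nonneg_left hGlb hs.le
        have e2 : s * (-((2*N) * S t)) = -(s * ((2*N) * S t)) := by ring
        linarith
    have hinf : m t ≤ ⨅ x, (h t x - s * G t x) := by
      apply le_ciInf
      intro x
      rcases le_or_gt (h t x) (m t + ρ) with hlow | hhigh
      · have hGle : G t x ≤ 0 := by
          rw [hG]
          apply Finset.sum_nonpos
          intro i hi
          have hci : 0 ≤ HoferBump.c0 l (t - a i) / κ :=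
            div_nonneg (HoferBump.c0_nonneg _ _) hκ.le
          rcases eq_or_lt_of_le (HoferBump.c0_nonneg l (t - a i)) with he | hpos
          · rw [← he]; simp
          · obtain ⟨htW, hti⟩ := hactive i t ht hpos
            have hFatbd : Fat i ρ x ≤ -(2*ρ) := by
              apply hFatle i hρ.le
              intro p hp
              have hpIcc : p ∈ Icc (0:ℝ) 1 := (hWsub i ρ) hp
              have hpi : |p - (i:ℝ)| ≤ ρ := by
                rw [hW] at hp
                rw [abs_le]
                constructor <;> linarith [hp.2.1, hp.2.2]
              have hpi' : |p - (i:ℝ)| ≤ δm := le_trans hpi (by linarith)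
              have hpt : |p - t| ≤ δm := by
                have b1 := abs_le.mp hti
                have b2 := abs_le.mp hpi
                rw [abs_le]
                constructor <;> linarith [b1.1, b1.2, b2.1, b2.2]
              have a1 := abs_le.mp (hmod p hpIcc t ht hpt x)
              have a2 := abs_le.mp (hmmod p hpIcc t ht hpt)
              have a3 := abs_le.mp (hMmod p hpIcc (i:ℝ) i.2.1 hpi')
              have a4 := abs_le.mp (hmmod p hpIcc (i:ℝ) i.2.1 hpi')
              have hosc : δ₀ ≤ M i - m i := i.2.2
              linarith [a1.1, a1.2, a2.1, a2.2, a3.1, a3.2, a4.1, a4.2]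
            have hf0 := hf_zero i x hFatbd
            have hvle : v i x ≤ 0 := by
              rw [hv]
              dsimp only
              rw [hf0]
              have := Finset.sum_nonneg (fun i (_ : i ∈ J) => (hf01 i x).1)
              linarith
            exact mul_nonpos_of_nonneg_of_nonpos hci hvle
        have h1 := hm_le ht x
        have h2 : s * G t x ≤ 0 := mul_nonpos_of_nonneg_of_nonpos hs.le hGle
        linarith
      · have hGub : G t x ≤ (2*N) * S t := by
          rw [hG, hS, Finset.mul_sum]
          apply Finset.sum_le_sum
          intro i hi
          have hci : 0 ≤ HoferBump.c0 l (t - a i) / κ :=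
            div_nonneg (HoferBump.c0_nonneg _ _) hκ.le
          have hvb := (abs_le.mp (hvbound i x)).2
          calc (HoferBump.c0 l (t - a i)/κ) * v i x
              ≤ (HoferBump.c0 l (t - a i)/κ) * (2*N) := mul_le_mul_of_nonneg_left hvb hci
          _ = (2*N) * (HoferBump.c0 l (t - a i)/κ) := by ring
        have h2 : s * G t x ≤ s * ((2*N) * S t) := mul_le_mul_of_nonneg_left hGub hs.le
        have h3 : 0 ≤ s * β * S t := mul_nonneg (mul_nonneg hs.le hβpos.le) hSt
        linarith
    linarith [hsup, hinf]
  -- conclude: contradiction with criticality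
  have hScont : Continuous S := by
    rw [hS]
    apply continuous_finset_sum
    intro i _
    exact ((HoferBump.c0_cont l).comp (continuous_id.sub continuous_const)).div_const κ
  have hSintegral : (∫ t in (0:ℝ)..1, S t) = N := by
    have hint : ∀ i ∈ J, IntervalIntegrable
        (fun t => HoferBump.c0 l (t - a i) / κ) MeasureTheory.volume 0 1 := by
      intro i _
      apply Continuous.intervalIntegrable
      exact ((HoferBump.c0_cont l).comp (continuous_id.sub continuous_const)).div_const κ
    have e : S = fun t => ∑ i ∈ J, HoferBump.c0 l (t - a i) / κ := hS
    rw [e, intervalIntegral.integral_finset_sum hint]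
    have hterm : ∀ i ∈ J, (∫ t in (0:ℝ)..1, HoferBump.c0 l (t - a i) / κ) = 1 := by
      intro i _
      rw [intervalIntegral.integral_div, HoferBump.c0_shift_integral hl (ha i).1 (ha i).2.1,
        ← hκdef, div_self (ne_of_gt hκ)]
    rw [Finset.sum_congr rfl hterm, Finset.sum_const, nsmul_eq_mul, mul_one, hNdef]
  have uc : ContinuousOn (fun p : ℝ × X =>
      (fun t x => h t x - s * G t x) p.1 p.2) (Icc 0 1 ×ˢ univ) :=
    hc.sub (continuousOn_const.mul hGc.continuousOn)
  have hintMm : IntervalIntegrable (fun t => M t - m t) MeasureTheory.volume 0 1 := by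
    apply ContinuousOn.intervalIntegrable
    rw [uIcc_of_le zero_le_one]
    exact hMc.sub hmc
  have hintS : IntervalIntegrable (fun t => s * β * S t) MeasureTheory.volume 0 1 :=
    ((continuous_const.mul hScont).intervalIntegrable _ _)
  have hint2 : IntervalIntegrable (fun t => (M t - m t) - s * β * S t)
      MeasureTheory.volume 0 1 := hintMm.sub hintS
  have hmono := intervalIntegral.integral_mono_on zero_le_one
    (integrable_osc (h := fun t x => h t x - s * G t x) uc) hint2 main
  have e2 : (∫ t in (0:ℝ)..1, ((M t - m t) - s * β * S t)) = hoferNorm h - s*β*N := by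
    rw [intervalIntegral.integral_sub hintMm hintS]
    have eM : (∫ t in (0:ℝ)..1, (M t - m t)) = hoferNorm h := by
      unfold hoferNorm
      simp only [hM, hm]
    have eS : (∫ t in (0:ℝ)..1, s * β * S t) = s*β*N := by
      rw [intervalIntegral.integral_const_mul, hSintegral]
    rw [eM, eS]
  have hposf : 0 < s * β * N := mul_pos (mul_pos hs hβpos) (by linarith)
  have hcrit := crit G hGc.continuousOn hGnorm s
  have efin : hoferNorm (fun t x => h t x - s * G t x) ≤ hoferNorm h - s*β*N := by
    calc hoferNorm (fun t x => h t x - s * G t x)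
        = ∫ t in (0:ℝ)..1, ((⨆ x, (h t x - s * G t x)) - ⨅ x, (h t x - s * G t x)) := rfl
    _ ≤ ∫ t in (0:ℝ)..1, ((M t - m t) - s * β * S t) := hmono
    _ = hoferNorm h - s*β*N := e2
  linarith

end

section
variable {X : Type*} [TopologicalSpace X] [CompactSpace X] [Nonempty X]

lemma hoferNorm_neg (u : ℝ → X → ℝ) : hoferNorm (fun t x => -u t x) = hoferNorm u := by
  unfold hoferNorm
  congr 1
  funext t
  have h1 := real_iInf_eq_neg_iSup_neg (fun x => u t x)
  have h2 := real_iInf_eq_neg_iSup_neg (fun x => -u t x)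
  simp only [neg_neg] at h2
  linarith

theorem l_critical_iff_quasi_autonomous'
    {X : Type*} [TopologicalSpace X] [CompactSpace X] [T2Space X] [Nonempty X]
    (h : ℝ → X → ℝ)
    (hcont : ContinuousOn (fun p : ℝ × X => h p.1 p.2) (Icc 0 1 ×ˢ univ)) :
    (∃ xp xm : X, ∀ t ∈ Icc (0:ℝ) 1,
        h t xp = (⨆ x, h t x) ∧ h t xm = (⨅ x, h t x)) ↔
    (∀ G : ℝ → X → ℝ,
        ContinuousOn (fun p : ℝ × X => G p.1 p.2) (Icc 0 1 ×ˢ univ) →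
        (∀ x : X, (∫ t in (0:ℝ)..1, G t x) = 0) →
        ∀ s : ℝ, hoferNorm h ≤ hoferNorm (fun t x => h t x - s * G t x)) := by
  constructor
  · rintro ⟨xp, xm, hx⟩ G Gc Gn s
    exact forward_dir hcont hx G Gc Gn s
  · intro crit
    obtain ⟨xp, hxp⟩ := exists_max_point hcont crit
    have hc' : ContinuousOn (fun p : ℝ × X => -h p.1 p.2) (Icc 0 1 ×ˢ univ) := hcont.neg
    have crit' : ∀ G : ℝ → X → ℝ,
        ContinuousOn (fun p : ℝ × X => G p.1 p.2) (Icc 0 1 ×ˢ univ) →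
        (∀ x : X, (∫ t in (0:ℝ)..1, G t x) = 0) →
        ∀ s : ℝ, hoferNorm (fun t x => -h t x) ≤
          hoferNorm (fun t x => (fun t x => -h t x) t x - s * G t x) := by
      intro G Gc Gn s
      have e1 : hoferNorm (fun t x => -h t x) = hoferNorm h := hoferNorm_neg h
      have e2 : hoferNorm (fun t x => (fun t x => -h t x) t x - s * G t x)
          = hoferNorm (fun t x => h t x + s * G t x) := by
        have e : (fun t x => (fun t x => -h t x) t x - s * G t x)
            = fun t x => -((fun t x => h t x + s * G t x) t x) := by
          funext t x; dsimp only; ring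
        rw [e, hoferNorm_neg]
      have e3 : (fun t x => h t x + s * G t x) = fun t x => h t x - (-s) * G t x := by
        funext t x; ring
      rw [e1, e2, e3]
      exact crit G Gc Gn (-s)
    obtain ⟨xm, hxm⟩ := exists_max_point (h := fun t x => -h t x) hc' crit'
    refine ⟨xp, xm, fun t ht => ⟨hxp t ht, ?_⟩⟩
    have h1 := hxm t ht
    have h2 := real_iInf_eq_neg_iSup_neg (fun x => h t x)
    rw [show (⨅ x, h t x) = -(⨆ x, -h t x) from h2, ← h1, neg_neg]
end


/-- Let X be a nonempty compact Hausdorff space and `h : [0,1] × X → ℝ`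
continuous. The following are equivalent:
(a) there exist `xp, xm ∈ X` with `h(t,xp) = max_x h(t,x)` and
    `h(t,xm) = min_x h(t,x)` for all `t ∈ [0,1]` (quasi-autonomy);
(b) for every continuous `G : [0,1] × X → ℝ` with `∫₀¹ G(t,x) dt = 0` for all `x`,
    and every `s ∈ ℝ`, one has `‖h − s·G‖ ≥ ‖h‖` (l-criticality). -/
theorem l_critical_iff_quasi_autonomous
    {X : Type*} [TopologicalSpace X] [CompactSpace X] [T2Space X] [Nonempty X]
    (h : ℝ → X → ℝ)
    (hcont : ContinuousOn (fun p : ℝ × X => h p.1 p.2) (Icc 0 1 ×ˢ univ)) :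
    (∃ xp xm : X, ∀ t ∈ Icc (0:ℝ) 1,
        h t xp = (⨆ x, h t x) ∧ h t xm = (⨅ x, h t x)) ↔
    (∀ G : ℝ → X → ℝ,
        ContinuousOn (fun p : ℝ × X => G p.1 p.2) (Icc 0 1 ×ˢ univ) →
        (∀ x : X, (∫ t in (0:ℝ)..1, G t x) = 0) →
        ∀ s : ℝ, hoferNorm h ≤ hoferNorm (fun t x => h t x - s * G t x)) :=
  l_critical_iff_quasi_autonomous' h hcont
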